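/- arXiv:2605.26948 — 7 statements merged into one kernel-verified Lean document; each statement's English description precedes it below -/
import Mathlib

section
/- The P–CEA rule satisfies order preservation: if c_i ≥ c_j then ψ^L_i(c,e) ≥ ψ^L_j(c,e) and c_i − ψ^L_i(c,e) ≥ c_j − ψ^L_j(c,e), for any claims problem (c,e) and 0 ≤ L ≤ λ. -/
open Finset

noncomputable def propRule {n : ℕ} (d : Fin n → ℝ) (m : ℝ) (i : Fin n) : ℝ :=
  if (∑ j, d j) = 0 then 0 else d i / (∑ j, d j) * m

noncomputable def psi {n : ℕ} (L : ℝ) (c : Fin n → ℝ) (e : ℝ) (i : Fin n) : ℝ :=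
  min (c i) L + propRule (fun j => c j - min (c j) L) (e - ∑ j, min (c j) L) i

/-! Writing `t = e^L / ∑ (c_j - c^L_j)`, the P–CEA award is
`ψ^L_i = c^L_i + (c_i - c^L_i) t` and the loss is `c_i - ψ^L_i = (c_i - c^L_i)(1 - t)`.
Both `x ↦ min x L` and `x ↦ x - min x L` are monotone, and `0 ≤ t ≤ 1` because
`0 ≤ e^L ≤ ∑ (c_j - c^L_j)`: the lower bound since `L ≤ λ`, the upper one since `e < ∑ c_j`. -/

theorem monotone_sub_min (L : ℝ) : Monotone fun x : ℝ => x - min x L := by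
  intro x y hxy
  rcases le_total x L with hx | hx <;> rcases le_total y L with hy | hy <;>
    simp only [min_eq_left, min_eq_right, hx, hy] <;> linarith

theorem min_add_sub_min_mul_le {L t x y : ℝ} (ht : 0 ≤ t) (hxy : x ≤ y) :
    min x L + (x - min x L) * t ≤ min y L + (y - min y L) * t :=
  add_le_add (min_le_min_right L hxy) (mul_le_mul_of_nonneg_right (monotone_sub_min L hxy) ht)

theorem sub_min_add_sub_min_mul_le {L t x y : ℝ} (ht : t ≤ 1) (hxy : x ≤ y) :
    x - (min x L + (x - min x L) * t) ≤ y - (min y L + (y - min y L) * t) := by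
  have := mul_le_mul_of_nonneg_right (monotone_sub_min L hxy) (sub_nonneg.2 ht)
  linarith

/-- Also correct when `∑ d = 0`, since then `m / ∑ d = 0` as well. -/
theorem propRule_eq_mul_div {n : ℕ} (d : Fin n → ℝ) (m : ℝ) (i : Fin n) :
    propRule d m i = d i * (m / ∑ j, d j) := by
  unfold propRule
  split_ifs with h
  · simp [h]
  · ring

noncomputable def psiRate {n : ℕ} (L : ℝ) (c : Fin n → ℝ) (e : ℝ) : ℝ :=
  (e - ∑ j, min (c j) L) / ∑ j, (c j - min (c j) L)

theorem psi_eq {n : ℕ} (L : ℝ) (c : Fin n → ℝ) (e : ℝ) (i : Fin n) :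
    psi L c e i = min (c i) L + (c i - min (c i) L) * psiRate L c e := by
  rw [psi, propRule_eq_mul_div, psiRate]

theorem psiRate_nonneg {n : ℕ} {L : ℝ} {c : Fin n → ℝ} {e : ℝ}
    (h : ∑ j, min (c j) L ≤ e) : 0 ≤ psiRate L c e :=
  div_nonneg (sub_nonneg.2 h)
    (sum_nonneg fun j _ => sub_nonneg.2 (min_le_left (c j) L))

theorem psiRate_le_one {n : ℕ} {L : ℝ} {c : Fin n → ℝ} {e : ℝ}
    (h : e ≤ ∑ j, c j) : psiRate L c e ≤ 1 := by
  refine div_le_one_of_le₀ ?_ (sum_nonneg fun j _ => sub_nonneg.2 (min_le_left (c j) L))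
  rw [sum_sub_distrib]
  linarith

theorem pcea_order_preservation_general {n : ℕ} (c : Fin n → ℝ) (e L lam : ℝ)
    (he : e < ∑ i, c i)
    (hlam : ∑ i, min (c i) lam = e)
    (hLlam : L ≤ lam) :
    ∀ i j : Fin n, c j ≤ c i →
      psi L c e j ≤ psi L c e i ∧ c j - psi L c e j ≤ c i - psi L c e i := by
  intro i j hji
  have hcapped : ∑ k, min (c k) L ≤ e :=
    hlam ▸ sum_le_sum fun k _ => min_le_min_left (c k) hLlam
  simp only [psi_eq]
  exact ⟨min_add_sub_min_mul_le (psiRate_nonneg hcapped) hji,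
    sub_min_add_sub_min_mul_le (psiRate_le_one he.le) hji⟩

theorem pcea_order_preservation {n : ℕ} (c : Fin n → ℝ) (e L lam : ℝ)
    (hc0 : ∀ i, 0 ≤ c i)
    (he0 : 0 ≤ e) (he : e < ∑ i, c i)
    (hlam0 : 0 ≤ lam) (hlam : ∑ i, min (c i) lam = e)
    (hL0 : 0 ≤ L) (hLlam : L ≤ lam) :
    ∀ i j : Fin n, c j ≤ c i →
      psi L c e j ≤ psi L c e i ∧ c j - psi L c e j ≤ c i - psi L c e i :=
  pcea_order_preservation_general c e L lam he hlam hLlam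
end

section
/- The P–CEA rule is resource monotonic when the parameter remains feasible: for a fixed claims vector c and estates e < e' < ∑_i c_i, if L ≤ λ(e) (the CEA level at estate e), then ψ^L_i(c, e') ≥ ψ^L_i(c, e) for every agent i. -/
open Finset

theorem pcea_resource_monotonic {n : ℕ} (c : Fin n → ℝ) (e e' L lam : ℝ)
    (hc0 : ∀ i, 0 ≤ c i)
    (he0 : 0 ≤ e) (hee' : e < e') (he' : e' < ∑ i, c i)
    (hlam0 : 0 ≤ lam) (hlam : ∑ i, min (c i) lam = e)
    (hL0 : 0 ≤ L) (hLlam : L ≤ lam) :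
    ∀ i, psi L c e i ≤ psi L c e' i := by
  intro i
  unfold psi propRule
  have hd : ∀ j, 0 ≤ c j - min (c j) L := fun j => sub_nonneg.2 (min_le_left _ _)
  by_cases h : (∑ j, (c j - min (c j) L)) = 0
  · simp [h]
  · simp only [h, if_false]
    have hcoef : 0 ≤ (c i - min (c i) L) / ∑ j, (c j - min (c j) L) :=
      div_nonneg (hd i) (Finset.sum_nonneg fun j _ => hd j)
    exact add_le_add_right
      (mul_le_mul_of_nonneg_left (sub_le_sub_right hee'.le _) hcoef) _
end

section
/- The P–CEA rule satisfies composition up: for a fixed claims vector c, estates e < e' < ∑_i c_i, and L ≤ λ(e), we have ψ^L(c, e') = ψ^L(c, e) + P(c − ψ^L(c, e), e' − e), where the remainder is distributed proportionally to residual claims c − ψ^L(c,e). -/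
open Finset

theorem pcea_composition_up {n : ℕ} (c : Fin n → ℝ) (e e' L lam : ℝ)
    (hc0 : ∀ i, 0 ≤ c i)
    (he0 : 0 ≤ e) (hee' : e < e') (he' : e' < ∑ i, c i)
    (hlam0 : 0 ≤ lam) (hlam : ∑ i, min (c i) lam = e)
    (hL0 : 0 ≤ L) (hLlam : L ≤ lam) :
    ∀ i, psi L c e' i = psi L c e i + propRule (fun j => c j - psi L c e j) (e' - e) i := by
  intro i
  have hS : ∑ j, min (c j) L ≤ e := by
    rw [← hlam]; exact Finset.sum_le_sum fun j _ => min_le_min le_rfl hLlam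
  have hsub : ∑ j, (c j - min (c j) L) = (∑ j, c j) - ∑ j, min (c j) L :=
    Finset.sum_sub_distrib _ _
  have hDpos : 0 < (∑ j, c j) - ∑ j, min (c j) L := by linarith
  have hDne : ((∑ j, c j) - ∑ j, min (c j) L) ≠ 0 := ne_of_gt hDpos
  have hDne' : (∑ j, (c j - min (c j) L)) ≠ 0 := by rw [hsub]; exact hDne
  have hce : ((∑ k, c k) - e) ≠ 0 := by intro h; linarith
  have hres : ∀ j, c j - psi L c e j
      = (c j - min (c j) L) * ((∑ k, c k) - e) / ((∑ k, c k) - ∑ k, min (c k) L) := by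
    intro j
    simp only [psi, propRule, hsub, if_neg hDne', if_neg hDne]
    field_simp
    ring
  have hressum : ∑ j, (c j - psi L c e j) = (∑ k, c k) - e := by
    rw [Finset.sum_congr rfl fun j _ => hres j, ← Finset.sum_div, ← Finset.sum_mul, hsub]
    field_simp
  have hresne : (∑ j, (c j - psi L c e j)) ≠ 0 := by rw [hressum]; exact hce
  have hprop : propRule (fun j => c j - psi L c e j) (e' - e) i
      = (c i - min (c i) L) * (e' - e) / ((∑ k, c k) - ∑ k, min (c k) L) := by
    simp only [propRule, hres i, hressum, if_neg hresne, if_neg hce]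
    field_simp
  rw [hprop]
  simp only [psi, propRule, hsub, if_neg hDne', if_neg hDne]
  field_simp
  ring
end

section
/- The P–CEA rule satisfies consistency: if x = ψ^L(c, e) for a claims problem (c, e) with L ≤ λ and N' ⊆ N is any subset of agents, then applying ψ^L to the reduced problem (c|_{N'}, ∑_{i ∈ N'} x_i) yields x|_{N'}, provided L remains weakly below the CEA level of the reduced problem. -/
open Finset

/-- The P–CEA awards when the population of agents is the finset `s`. -/
noncomputable def psiOn {n : ℕ} (s : Finset (Fin n)) (L : ℝ) (c : Fin n → ℝ) (e : ℝ)
    (i : Fin n) : ℝ :=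
  min (c i) L +
    (if (∑ j ∈ s, (c j - min (c j) L)) = 0 then 0
     else (c i - min (c i) L) / (∑ j ∈ s, (c j - min (c j) L)) * (e - ∑ j ∈ s, min (c j) L))

lemma pcea_aux (a b d t : ℝ) (hb : b ≠ 0) : a / b * (b / d * t) = a / d * t := by
  field_simp

theorem pcea_consistency {n : ℕ} (c : Fin n → ℝ) (e L lam lam' : ℝ)
    (s : Finset (Fin n))
    (hc0 : ∀ i, 0 ≤ c i)
    (he0 : 0 ≤ e) (he : e < ∑ i, c i)
    (hlam0 : 0 ≤ lam) (hlam : ∑ i, min (c i) lam = e)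
    (hL0 : 0 ≤ L) (hLlam : L ≤ lam)
    -- `lam'` is the CEA level of the reduced problem, and `L` stays weakly below it
    (hlam'0 : 0 ≤ lam')
    (hlam' : ∑ i ∈ s, min (c i) lam' = ∑ i ∈ s, psiOn Finset.univ L c e i)
    (hLlam' : L ≤ lam') :
    ∀ i ∈ s, psiOn s L c (∑ j ∈ s, psiOn Finset.univ L c e j) i
      = psiOn Finset.univ L c e i := by
  intro i hi
  by_cases hR : (∑ j, (c j - min (c j) L)) = 0
  · have hall : ∀ j, c j - min (c j) L = 0 := by
      intro j
      have hnn : ∀ j ∈ Finset.univ, (0:ℝ) ≤ c j - min (c j) L := fun j _ => by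
        have := min_le_left (c j) L; linarith
      exact (Finset.sum_eq_zero_iff_of_nonneg hnn).mp hR j (mem_univ j)
    have hRs : (∑ j ∈ s, (c j - min (c j) L)) = 0 :=
      Finset.sum_eq_zero (fun j _ => hall j)
    simp [psiOn, hR, hRs]
  · have hsum : (∑ x ∈ s, (min (c x) L +
          (c x - min (c x) L) / (∑ j, (c j - min (c j) L)) * (e - ∑ j, min (c j) L)))
          - ∑ j ∈ s, min (c j) L
        = (∑ j ∈ s, (c j - min (c j) L)) / (∑ k, (c k - min (c k) L))
            * (e - ∑ k, min (c k) L) := by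
      rw [← Finset.sum_sub_distrib]
      simp only [add_sub_cancel_left, div_mul_eq_mul_div, ← Finset.sum_div, ← Finset.sum_mul]
    by_cases hRs : (∑ j ∈ s, (c j - min (c j) L)) = 0
    · have hnn : ∀ j ∈ s, (0:ℝ) ≤ c j - min (c j) L := fun j _ => by
        have := min_le_left (c j) L; linarith
      have hi0 : c i - min (c i) L = 0 :=
        (Finset.sum_eq_zero_iff_of_nonneg hnn).mp hRs i hi
      simp [psiOn, hR, hRs, hi0]
    · simp only [psiOn, if_neg hR, if_neg hRs]
      rw [hsum, pcea_aux _ _ _ _ hRs]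
end

section
/- The P–CEA rule satisfies No Advantageous Reallocation beyond L (NAR_L): for any claims problem (c,e), parameter L ≤ λ, and any coalition S of agents each with claim ≥ L, if (c'_i)_{i∈S} satisfies c'_i ≥ L for all i ∈ S and ∑_{i∈S} c'_i = ∑_{i∈S} c_i, then ∑_{i∈S} ψ^L_i((c'_S, c_{N∖S}), e) = ∑_{i∈S} ψ^L_i(c, e). -/
open Finset

theorem pcea_NAR {n : ℕ} (c c' : Fin n → ℝ) (e L lam : ℝ) (S : Finset (Fin n))
    (hc0 : ∀ i, 0 ≤ c i)
    (he0 : 0 ≤ e) (he : e < ∑ i, c i)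
    (hlam0 : 0 ≤ lam) (hlam : ∑ i, min (c i) lam = e)
    (hL0 : 0 ≤ L) (hLlam : L ≤ lam)
    (hS : ∀ i ∈ S, L ≤ c i) (hS' : ∀ i ∈ S, L ≤ c' i)
    (hoff : ∀ i ∉ S, c' i = c i)
    (hsum : ∑ i ∈ S, c' i = ∑ i ∈ S, c i) :
    ∑ i ∈ S, psi L c' e i = ∑ i ∈ S, psi L c e i := by
  have hmin : ∀ j, min (c' j) L = min (c j) L := by
    intro j
    by_cases hj : j ∈ S
    · rw [min_eq_right (hS' j hj), min_eq_right (hS j hj)]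
    · rw [hoff j hj]
  have htot : (∑ j, c' j) = ∑ j, c j := by
    rw [← Finset.sum_add_sum_compl S, ← Finset.sum_add_sum_compl S (f := c), hsum]
    congr 1
    exact Finset.sum_congr rfl fun j hj => hoff j (Finset.mem_compl.mp hj)
  have hM : (∑ j, min (c' j) L) = ∑ j, min (c j) L :=
    Finset.sum_congr rfl fun j _ => hmin j
  have hD : (∑ j, (c' j - min (c' j) L)) = ∑ j, (c j - min (c j) L) := by
    simp only [Finset.sum_sub_distrib, htot, hM]
  simp only [psi, Finset.sum_add_distrib]
  congr 1
  · exact Finset.sum_congr rfl fun j hj => hmin j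
  · simp only [propRule, hD]
    by_cases h0 : (∑ j, (c j - min (c j) L)) = 0
    · simp [h0]
    · simp only [h0, if_neg, if_false]
      rw [hM, ← Finset.sum_mul, ← Finset.sum_mul, ← Finset.sum_div, ← Finset.sum_div,
        Finset.sum_sub_distrib, Finset.sum_sub_distrib, hsum,
        Finset.sum_congr rfl fun j (_ : j ∈ S) => hmin j, Finset.sum_sub_distrib]
end

section
/- Lorenz monotonicity of the P–CEA family: for a claims problem (c, e) with c₁ ≤ ... ≤ c_n and parameters 0 ≤ L < L' ≤ λ, the allocation ψ^{L'}(c,e) Lorenz-dominates ψ^L(c,e); that is, for every k ∈ {1,...,n}, ∑_{i=1}^k ψ^{L'}_i(c,e) ≥ ∑_{i=1}^k ψ^L_i(c,e), with equality of the full sums (both equal e). -/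
open Finset

theorem pcea_lorenz_monotone {n : ℕ} (c : Fin n → ℝ) (e L L' lam : ℝ)
    (hc0 : ∀ i, 0 ≤ c i) (hmono : Monotone c)
    (he0 : 0 ≤ e) (he : e < ∑ i, c i)
    (hlam0 : 0 ≤ lam) (hlam : ∑ i, min (c i) lam = e)
    (hL0 : 0 ≤ L) (hLL' : L < L') (hL'lam : L' ≤ lam) :
    (∀ k : ℕ,
      ∑ i ∈ Finset.univ.filter (fun i : Fin n => (i : ℕ) < k), psi L c e i ≤
      ∑ i ∈ Finset.univ.filter (fun i : Fin n => (i : ℕ) < k), psi L' c e i) ∧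
    (∑ i, psi L' c e i = e ∧ ∑ i, psi L c e i = e) := by
  set C := ∑ i, c i with hC
  have hSle : ∀ M : ℝ, M ≤ lam → (∑ i, min (c i) M) ≤ e := by
    intro M hM
    rw [← hlam]
    exact Finset.sum_le_sum fun i _ => min_le_min le_rfl hM
  have hSL : (∑ i, min (c i) L) ≤ e := hSle L (le_of_lt (lt_of_lt_of_le hLL' hL'lam))
  have hSL' : (∑ i, min (c i) L') ≤ e := hSle L' hL'lam
  have hDL : 0 < C - ∑ i, min (c i) L := by linarith
  have hDL' : 0 < C - ∑ i, min (c i) L' := by linarith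
  have hsumdiff : ∀ M : ℝ, (∑ j, (c j - min (c j) M)) = C - ∑ j, min (c j) M := by
    intro M; rw [Finset.sum_sub_distrib]
  have hpsi : ∀ M : ℝ, (0 < C - ∑ i, min (c i) M) → ∀ i, psi M c e i =
      min (c i) M + (c i - min (c i) M) *
        ((e - ∑ j, min (c j) M) / (C - ∑ j, min (c j) M)) := by
    intro M hD i
    unfold psi propRule
    simp only []
    rw [hsumdiff M, if_neg hD.ne']
    ring
  -- ratios
  set rL : ℝ := (e - ∑ j, min (c j) L) / (C - ∑ j, min (c j) L) with hrL
  set rL' : ℝ := (e - ∑ j, min (c j) L') / (C - ∑ j, min (c j) L') with hrL'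
  have hSS' : (∑ i, min (c i) L) ≤ ∑ i, min (c i) L' :=
    Finset.sum_le_sum fun i _ => min_le_min le_rfl hLL'.le
  have hr'le : rL' ≤ rL := by
    rw [hrL', hrL, div_le_div_iff₀ hDL' hDL]
    nlinarith [mul_nonneg (sub_nonneg.2 hSS') (sub_pos.2 he).le]
  have hrlt1 : rL < 1 := by
    rw [hrL, div_lt_one hDL]; linarith
  have hr'0 : 0 ≤ rL' := div_nonneg (by linarith) hDL'.le
  have hmin_le : ∀ (i : Fin n) (M : ℝ), min (c i) M ≤ c i := fun i M => min_le_left _ _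
  -- nonnegativity of the difference where c i ≤ L'
  have hnn : ∀ i : Fin n, c i ≤ L' → 0 ≤ psi L' c e i - psi L c e i := by
    intro i hi
    rw [hpsi L' hDL' i, hpsi L hDL i, ← hrL', ← hrL, min_eq_left hi]
    have h1 : min (c i) L ≤ c i := hmin_le i L
    nlinarith [sub_nonneg.2 h1]
  -- single-crossing step
  have hstep : ∀ i j : Fin n, i ≤ j → psi L' c e i - psi L c e i < 0 →
      psi L' c e j - psi L c e j ≤ psi L' c e i - psi L c e i := by
    intro i j hij hi
    have hci : L' < c i := by
      by_contra h
      exact absurd (hnn i (not_lt.1 h)) (not_le.2 hi)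
    have hcj : L' < c j := lt_of_lt_of_le hci (hmono hij)
    have hmi' : min (c i) L' = L' := min_eq_right hci.le
    have hmj' : min (c j) L' = L' := min_eq_right hcj.le
    have hmi : min (c i) L = L := min_eq_right (le_trans hLL'.le hci.le)
    have hmj : min (c j) L = L := min_eq_right (le_trans hLL'.le hcj.le)
    rw [hpsi L' hDL' i, hpsi L hDL i, hpsi L' hDL' j, hpsi L hDL j,
      ← hrL', ← hrL, hmi', hmj', hmi, hmj]
    nlinarith [mul_nonneg (sub_nonneg.2 (hmono hij)) (sub_nonneg.2 hr'le)]
  -- totals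
  have htot : ∀ M : ℝ, 0 < C - ∑ i, min (c i) M → ∑ i, psi M c e i = e := by
    intro M hD
    rw [Finset.sum_congr rfl (fun i _ => hpsi M hD i), Finset.sum_add_distrib,
      ← Finset.sum_mul, hsumdiff M, mul_comm, div_mul_cancel₀ _ hD.ne']
    ring
  refine ⟨?_, htot L' hDL', htot L hDL⟩
  intro k
  rw [← sub_nonneg, ← Finset.sum_sub_distrib]
  by_cases hcase : ∀ i ∈ Finset.univ.filter (fun i : Fin n => (i : ℕ) < k),
      0 ≤ psi L' c e i - psi L c e i
  · exact Finset.sum_nonneg hcase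
  · push_neg at hcase
    obtain ⟨i₀, hi₀mem, hi₀⟩ := hcase
    have hi₀k : (i₀ : ℕ) < k := (Finset.mem_filter.1 hi₀mem).2
    have htotal : ∑ i, (psi L' c e i - psi L c e i) = 0 := by
      rw [Finset.sum_sub_distrib, htot L' hDL', htot L hDL]; ring
    have hsplit := Finset.sum_filter_add_sum_filter_not Finset.univ
      (fun i : Fin n => (i : ℕ) < k) (fun i => psi L' c e i - psi L c e i)
    have hneg : ∑ i ∈ Finset.univ.filter (fun i : Fin n => ¬ (i : ℕ) < k),
        (psi L' c e i - psi L c e i) ≤ 0 := by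
      apply Finset.sum_nonpos
      intro i hi
      have hik : ¬ (i : ℕ) < k := (Finset.mem_filter.1 hi).2
      have h0i : i₀ ≤ i := by
        rw [Fin.le_def]; omega
      exact le_trans (hstep i₀ i h0i hi₀) hi₀.le
    linarith
end

section
/- The dual of the P–CEA rule admits the closed form ψ^L_dual(c,e) = P(c − c^L, e): applying the duality operation S^d(c,e) = c − S(c, c_N − e) to ψ^L (with parameter L applied in the dual problem) yields, for each agent i, ψ^L_dual,i(c,e) = ((c_i − min{c_i,L})/(∑_j (c_j − min{c_j,L})))·e, provided L ≤ λ(c, c_N − e). -/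
open Finset

theorem pcea_dual_closed_form {n : ℕ} (c : Fin n → ℝ) (e L lam : ℝ)
    (hc0 : ∀ i, 0 ≤ c i)
    (he0 : 0 ≤ e) (he : e < ∑ i, c i)
    -- lam is the CEA level of the dual problem (c, c_N − e)
    (hlam0 : 0 ≤ lam) (hlam : ∑ i, min (c i) lam = (∑ i, c i) - e)
    (hL0 : 0 ≤ L) (hLlam : L ≤ lam) :
    ∀ i, c i - psi L c ((∑ j, c j) - e) i
      = propRule (fun j => c j - min (c j) L) e i := by
  intro i
  set d : Fin n → ℝ := fun j => c j - min (c j) L with hd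
  have hsum : ((∑ j, c j) - e) - ∑ j, min (c j) L = (∑ j, d j) - e := by
    simp [hd, Finset.sum_sub_distrib]; ring
  have hdi : c i - c i ⊓ L = d i := rfl
  by_cases h : (∑ j, d j) = 0
  · have hdi0 : d i = 0 := by
      have hnn : ∀ j ∈ Finset.univ, 0 ≤ d j := fun j _ =>
        sub_nonneg.mpr (min_le_left _ _)
      exact (Finset.sum_eq_zero_iff_of_nonneg hnn).mp h i (Finset.mem_univ i)
    simp only [psi, propRule, hsum, h, if_pos]
    rw [if_pos (show (∑ x, (c x - min (c x) L)) = 0 from h)]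
    rw [hdi0] at hdi; linarith
  · simp only [psi, propRule, hsum, h, ite_false]
    have hsplit : d i / (∑ j, d j) * ((∑ j, d j) - e)
        = d i - d i / (∑ j, d j) * e := by field_simp
    rw [hsplit, if_neg (show ¬ (∑ x, (c x - min (c x) L)) = 0 from h)]; linarith
end
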